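/- Let ℓ ≥ 1. The number of elements g ∈ GU₂(𝔬_ℓ) with g² = I equals (q − 1)·q^{2ℓ−1} + 2. -/

import Mathlib

open Matrix

/-- The antidiagonal permutation matrix `W`. -/
def Wmat (OO : Type) [CommRing OO] : Matrix (Fin 2) (Fin 2) OO := !![0, 1; 1, 0]

lemma Wmat_det_isUnit (OO : Type) [CommRing OO] : IsUnit (Wmat OO).det := by
  have : (Wmat OO).det = -1 := by simp [Wmat, Matrix.det_fin_two_of]
  rw [this]; exact isUnit_one.neg

/-- `A* = W (A°)ᵀ W⁻¹`, where `°` is applied entrywise. -/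
noncomputable def mstar {OO : Type} [CommRing OO] (c : OO →+* OO)
    (M : Matrix (Fin 2) (Fin 2) OO) : Matrix (Fin 2) (Fin 2) OO :=
  Wmat OO * (M.map c)ᵀ * (Wmat OO)⁻¹

lemma mstar_mul {OO : Type} [CommRing OO] (c : OO →+* OO)
    (M N : Matrix (Fin 2) (Fin 2) OO) :
    mstar c (M * N) = mstar c N * mstar c M := by
  unfold mstar
  rw [Matrix.map_mul, Matrix.transpose_mul]
  simp only [mul_assoc]
  rw [Matrix.nonsing_inv_mul_cancel_left _ _ (Wmat_det_isUnit OO)]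

lemma mstar_one {OO : Type} [CommRing OO] (c : OO →+* OO) :
    mstar c (1 : Matrix (Fin 2) (Fin 2) OO) = 1 := by
  unfold mstar
  rw [Matrix.map_one c c.map_zero c.map_one, Matrix.transpose_one, mul_one,
    Matrix.mul_nonsing_inv _ (Wmat_det_isUnit OO)]

lemma gu_one {OO : Type} [CommRing OO] (c : OO →+* OO) :
    mstar c ((1 : GL (Fin 2) OO) : Matrix (Fin 2) (Fin 2) OO) *
      ((1 : GL (Fin 2) OO) : Matrix (Fin 2) (Fin 2) OO) = 1 := by
  rw [Units.val_one, mstar_one, one_mul]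

lemma gu_mul {OO : Type} [CommRing OO] (c : OO →+* OO) (a b : GL (Fin 2) OO)
    (ha : mstar c ↑a * (↑a : Matrix (Fin 2) (Fin 2) OO) = 1)
    (hb : mstar c ↑b * (↑b : Matrix (Fin 2) (Fin 2) OO) = 1) :
    mstar c (↑(a * b)) * (↑(a * b) : Matrix (Fin 2) (Fin 2) OO) = 1 := by
  rw [Units.val_mul]
  rw [mstar_mul]
  rw [mul_assoc]
  rw [← mul_assoc (mstar c (↑a : Matrix (Fin 2) (Fin 2) OO))
    (↑a : Matrix (Fin 2) (Fin 2) OO) (↑b : Matrix (Fin 2) (Fin 2) OO)]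
  rw [ha, one_mul]
  exact hb

lemma gu_inv {OO : Type} [CommRing OO] (c : OO →+* OO) (a : GL (Fin 2) OO)
    (ha : mstar c ↑a * (↑a : Matrix (Fin 2) (Fin 2) OO) = 1) :
    mstar c (↑a⁻¹) * (↑a⁻¹ : Matrix (Fin 2) (Fin 2) OO) = 1 := by
  have h1 : mstar c (↑a : Matrix (Fin 2) (Fin 2) OO) = ↑a⁻¹ := by
    calc mstar c (↑a : Matrix (Fin 2) (Fin 2) OO)
        = mstar c (↑a : Matrix (Fin 2) (Fin 2) OO) *
            ((↑a : Matrix (Fin 2) (Fin 2) OO) * (↑a⁻¹ : Matrix (Fin 2) (Fin 2) OO)) := by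
          rw [a.mul_inv, mul_one]
      _ = mstar c (↑a : Matrix (Fin 2) (Fin 2) OO) * (↑a : Matrix (Fin 2) (Fin 2) OO) *
            (↑a⁻¹ : Matrix (Fin 2) (Fin 2) OO) := by rw [mul_assoc]
      _ = ↑a⁻¹ := by rw [ha, one_mul]
  calc mstar c (↑a⁻¹ : Matrix (Fin 2) (Fin 2) OO) * (↑a⁻¹ : Matrix (Fin 2) (Fin 2) OO)
      = mstar c (↑a⁻¹ : Matrix (Fin 2) (Fin 2) OO) *
          mstar c (↑a : Matrix (Fin 2) (Fin 2) OO) := by rw [h1]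
    _ = mstar c ((↑a : Matrix (Fin 2) (Fin 2) OO) * (↑a⁻¹ : Matrix (Fin 2) (Fin 2) OO)) :=
        (mstar_mul c _ _).symm
    _ = 1 := by rw [a.mul_inv, mstar_one]

/-- The unitary group `GU₂(𝔬_ℓ)` as a subgroup of `GL₂(𝔒_ℓ)`, with respect to the
entrywise involution `c`. -/
noncomputable def GU2 (OO : Type) [CommRing OO] (c : OO →+* OO) :
    Subgroup (GL (Fin 2) OO) where
  carrier := {A | mstar c (A : Matrix (Fin 2) (Fin 2) OO) * (A : Matrix (Fin 2) (Fin 2) OO) = 1}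
  one_mem' := gu_one c
  mul_mem' := fun ha hb => gu_mul c _ _ ha hb
  inv_mem' := fun ha => gu_inv c _ ha

/-!
An involution `g ∈ GU₂` satisfies `g* = g⁻¹ = g`, so `g = !![x + yε, b; c, x - yε]` with
`x, y, b, c ∈ 𝔬_ℓ`, and since `2` is a unit, `g² = 1` reads `xy = xb = xc = 0`,
`x² + ε²y² + bc = 1`. In the local ring `𝔬_ℓ` either `x` is a unit, forcing `g = ±1`, or `x = 0`:
otherwise `y` and `b` are non-units and `x² + ε²y² + bc` would lie in the maximal ideal.
For `x = 0`, `1 - ε²y²` is a unit because `ε²` is a non-square mod `𝔭`, so `b` is an arbitrary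
unit and `c` is determined, giving `q^ℓ (q^ℓ - q^(ℓ-1))` further involutions.
-/

open IsLocalRing

section QuotientOfLocalRing

variable {O : Type*} [CommRing O] [IsLocalRing O] (I : Ideal O) [Nontrivial (O ⧸ I)]

instance Ideal.Quotient.isLocalRing : IsLocalRing (O ⧸ I) :=
  .of_surjective' _ Ideal.Quotient.mk_surjective

theorem IsLocalRing.card_residueField_quotient :
    Nat.card (ResidueField (O ⧸ I)) = Nat.card (ResidueField O) := by
  have hI : I ≤ maximalIdeal O := le_maximalIdeal (Ideal.Quotient.nontrivial_iff.mp ‹_›)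
  have hmap : (maximalIdeal O).map (Ideal.Quotient.mk I) = maximalIdeal (O ⧸ I) :=
    map_maximalIdeal_of_surjective _ Ideal.Quotient.mk_surjective
  exact Nat.card_congr ((Ideal.quotEquivOfEq hmap.symm).trans
    (DoubleQuot.quotQuotEquivQuotOfLE hI)).toEquiv

end QuotientOfLocalRing

section FiniteLocalRing

variable (R : Type*) [CommRing R] [IsLocalRing R] [Finite R]

theorem IsLocalRing.card_units_add_card_maximalIdeal :
    Nat.card Rˣ + Nat.card (maximalIdeal R) = Nat.card R := by
  classical
  have hunits : Rˣ ≃ {r : R // IsUnit r} := Submonoid.unitsTypeEquivIsUnitSubmonoid.toEquiv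
  have hmax : maximalIdeal R ≃ {r : R // ¬IsUnit r} :=
    Equiv.subtypeEquivRight fun r => mem_maximalIdeal r
  rw [Nat.card_congr hunits, Nat.card_congr hmax, ← Nat.card_sum]
  exact Nat.card_congr (Equiv.sumCompl IsUnit)

theorem IsLocalRing.card_units_mul_card_residueField :
    Nat.card Rˣ * Nat.card (ResidueField R) =
      Nat.card R * (Nat.card (ResidueField R) - 1) := by
  have hR : Nat.card (maximalIdeal R) * Nat.card (ResidueField R) = Nat.card R :=
    (Submodule.card_eq_card_quotient_mul_card (maximalIdeal R)).symm
  calc Nat.card Rˣ * Nat.card (ResidueField R)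
      = (Nat.card Rˣ + Nat.card (maximalIdeal R)) * Nat.card (ResidueField R) -
          Nat.card (maximalIdeal R) * Nat.card (ResidueField R) := by
        rw [Nat.add_mul, Nat.add_sub_cancel]
    _ = Nat.card R * (Nat.card (ResidueField R) - 1) := by
        rw [card_units_add_card_maximalIdeal, hR, Nat.mul_sub_one]

end FiniteLocalRing

section DiscreteValuationRing

variable {O : Type*} [CommRing O] [IsDomain O] [IsDiscreteValuationRing O]

theorem IsDiscreteValuationRing.card_quotient_maximalIdeal_pow (n : ℕ) :
    Nat.card (O ⧸ IsLocalRing.maximalIdeal O ^ n) = Nat.card (ResidueField O) ^ n := by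
  have h := cardQuot_pow_of_prime (IsDiscreteValuationRing.not_a_field O) (i := n)
  rwa [Submodule.cardQuot_apply, Submodule.cardQuot_apply] at h

end DiscreteValuationRing

section ResidueUnits

variable {O : Type*} [CommRing O] [IsLocalRing O]

theorem IsLocalRing.isUnit_two_of_odd_ringChar (hodd : Odd (ringChar (ResidueField O))) :
    IsUnit (2 : O) := by
  refine (residue_ne_zero_iff_isUnit 2).mp ?_
  rw [map_ofNat]
  exact Ring.two_ne_zero fun h => Nat.not_odd_iff_even.mpr even_two (h ▸ hodd)

theorem IsLocalRing.isUnit_one_sub_mul_sq {u : O} (hu : ¬∃ t, t ^ 2 = residue O u) (y : O) :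
    IsUnit (1 - u * y ^ 2) := by
  by_contra h
  rw [← residue_ne_zero_iff_isUnit, not_not, map_sub, map_one, map_mul, map_pow] at h
  refine hu ⟨(residue O y)⁻¹, ?_⟩
  rw [inv_pow]
  exact (eq_inv_of_mul_eq_one_left (by linear_combination -h)).symm

end ResidueUnits

section InvolutionCoords

variable {R : Type*} [CommRing R]

def involutionCoords (w : R) : Set (R × R × R × R) :=
  {p | p.1 * p.2.1 = 0 ∧ p.1 * p.2.2.1 = 0 ∧ p.1 * p.2.2.2 = 0 ∧
    p.1 ^ 2 + w * p.2.1 ^ 2 + p.2.2.1 * p.2.2.2 = 1}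

def unitConic (w : R) : Set (R × R × R) :=
  {p | w * p.1 ^ 2 + p.2.1 * p.2.2 = 1}

theorem card_unitConic {w : R} (hw : ∀ y : R, IsUnit (1 - w * y ^ 2)) :
    Nat.card (unitConic w) = Nat.card R * Nat.card Rˣ := by
  rw [← Nat.card_prod]
  symm
  refine Nat.card_eq_of_bijective
    (fun yb => ⟨(yb.1, yb.2, yb.2⁻¹ * (1 - w * yb.1 ^ 2)), ?_⟩) ⟨?_, ?_⟩
  · show w * _ ^ 2 + _ * _ = 1
    rw [Units.mul_inv_cancel_left]
    ring
  · rintro ⟨y, b⟩ ⟨y', b'⟩ h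
    simp only [Subtype.mk.injEq, Prod.mk.injEq] at h
    exact Prod.ext h.1 (Units.ext h.2.1)
  · rintro ⟨⟨y, b, c⟩, h⟩
    have hconic : w * y ^ 2 + b * c = 1 := h
    have hbc : b * c = 1 - w * y ^ 2 := by linear_combination hconic
    have hb : IsUnit b := isUnit_of_mul_isUnit_left (hbc ▸ hw y)
    refine ⟨(y, hb.unit), Subtype.ext ?_⟩
    simp only [IsUnit.unit_spec, ← hbc, ← mul_assoc, hb.val_inv_mul, one_mul]

variable [IsLocalRing R] (h2 : IsUnit (2 : R))
include h2

theorem IsLocalRing.sq_eq_one_iff_of_isUnit_two {x : R} : x ^ 2 = 1 ↔ x = 1 ∨ x = -1 := by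
  refine ⟨fun hx => ?_, by rintro (rfl | rfl) <;> ring⟩
  have hprod : (x + 1) * (x - 1) = 0 := by linear_combination hx
  have hsum : IsUnit ((x + 1) + -(x - 1)) := by convert h2 using 1; ring
  rcases isUnit_or_isUnit_of_isUnit_add hsum with h | h
  · exact .inl (sub_eq_zero.mp (h.mul_right_eq_zero.mp hprod))
  · exact .inr (eq_neg_of_add_eq_zero_left ((IsUnit.neg_iff _).mp h |>.mul_left_eq_zero.mp hprod))

theorem involutionCoords_eq (w : R) :
    involutionCoords w = Prod.mk 0 '' unitConic w ∪ {(1, 0, 0, 0), (-1, 0, 0, 0)} := by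
  ext ⟨x, y, b, c⟩
  simp only [involutionCoords, Set.mem_ofPred_eq, unitConic, Set.union_insert,
    Set.union_singleton, Set.mem_insert_iff, Prod.mk.injEq, Set.mem_image, exists_eq_right_right]
  constructor
  · rintro ⟨hxy, hxb, hxc, h⟩
    by_cases hx : IsUnit x
    · obtain ⟨rfl, rfl, rfl⟩ : y = 0 ∧ b = 0 ∧ c = 0 :=
        ⟨hx.mul_right_eq_zero.mp hxy, hx.mul_right_eq_zero.mp hxb, hx.mul_right_eq_zero.mp hxc⟩
      have hx2 : x ^ 2 = 1 := by linear_combination h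
      rcases (sq_eq_one_iff_of_isUnit_two h2).mp hx2 with rfl | rfl <;> simp
    · have hx0 : x = 0 := by
        by_contra hx0
        have hy : y ∈ maximalIdeal R := (mem_maximalIdeal y).mpr fun hy =>
          hx0 (hy.mul_left_eq_zero.mp hxy)
        have hb : b ∈ maximalIdeal R := (mem_maximalIdeal b).mpr fun hb =>
          hx0 (hb.mul_left_eq_zero.mp hxb)
        have hxm : x ∈ maximalIdeal R := (mem_maximalIdeal x).mpr hx
        refine (mem_maximalIdeal (1 : R)).mp ?_ isUnit_one
        rw [← h]
        exact add_mem (add_mem (Ideal.pow_mem_of_mem _ hxm 2 two_pos)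
          (Ideal.mul_mem_left _ _ (Ideal.pow_mem_of_mem _ hy 2 two_pos)))
          (Ideal.mul_mem_right _ _ hb)
      subst hx0
      exact .inr (.inr ⟨by linear_combination h, rfl⟩)
  · rintro (⟨rfl, rfl, rfl, rfl⟩ | ⟨rfl, rfl, rfl, rfl⟩ | ⟨h, rfl⟩)
    · refine ⟨?_, ?_, ?_, ?_⟩ <;> ring
    · refine ⟨?_, ?_, ?_, ?_⟩ <;> ring
    · exact ⟨zero_mul _, zero_mul _, zero_mul _, by linear_combination h⟩

theorem card_involutionCoords [Finite R] {w : R} (hw : ∀ y : R, IsUnit (1 - w * y ^ 2)) :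
    Nat.card (involutionCoords w) = Nat.card R * Nat.card Rˣ + 2 := by
  have hne : (1 : R) ≠ -1 := fun h => h2.ne_zero (by linear_combination h)
  rw [involutionCoords_eq h2, Nat.card_coe_set_eq, Set.ncard_union_eq,
    Set.ncard_image_of_injective _ (Prod.mk_right_injective 0), Set.ncard_pair,
    ← Nat.card_coe_set_eq, card_unitConic hw]
  · simpa using hne
  · rw [Set.disjoint_left]
    rintro _ ⟨p, -, rfl⟩ hp
    simp at hp

end InvolutionCoords

section Mstar

variable {OO : Type} [CommRing OO]

theorem Wmat_inv : (Wmat OO)⁻¹ = Wmat OO :=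
  Matrix.inv_eq_right_inv (by ext i j; fin_cases i <;> fin_cases j <;> simp [Wmat])

theorem mstar_apply (c : OO →+* OO) (M : Matrix (Fin 2) (Fin 2) OO) :
    mstar c M = !![c (M 1 1), c (M 0 1); c (M 1 0), c (M 0 0)] := by
  rw [mstar, Wmat_inv]
  ext i j
  fin_cases i <;> fin_cases j <;>
    simp [Wmat, Matrix.mul_apply, Matrix.vecMul, dotProduct, Fin.sum_univ_two]

theorem mstar_mul_self_eq_one_iff (c : OO →+* OO) {M : Matrix (Fin 2) (Fin 2) OO}
    (hM : M * M = 1) : mstar c M * M = 1 ↔ mstar c M = M :=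
  ⟨fun h => by rw [← mul_one (mstar c M), ← hM, ← mul_assoc, h, one_mul], fun h => by rw [h, hM]⟩

theorem card_GU2_sq_eq_one (c : OO →+* OO) :
    Nat.card {g : GU2 OO c // g ^ 2 = 1} =
      Nat.card {M : Matrix (Fin 2) (Fin 2) OO | mstar c M = M ∧ M * M = 1} := by
  have hsq (g : GU2 OO c) : g ^ 2 = 1 ↔ (g.1 : Matrix (Fin 2) (Fin 2) OO) * g.1 = 1 := by
    rw [pow_two, ← Units.val_mul, ← Subgroup.coe_mul, Units.val_eq_one, OneMemClass.coe_eq_one]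
  refine Nat.card_eq_of_bijective
    (fun g => ⟨g.1.1, (mstar_mul_self_eq_one_iff c ((hsq _).mp g.2)).mp g.1.2, (hsq _).mp g.2⟩)
    ⟨fun g h hgh => Subtype.ext (Subtype.ext (Units.ext (congrArg Subtype.val hgh))), ?_⟩
  rintro ⟨M, hstar, hM⟩
  let g : GU2 OO c := ⟨⟨M, M, hM, hM⟩, show mstar c M * M = 1 by rw [hstar, hM]⟩
  exact ⟨⟨g, (hsq g).mpr hM⟩, rfl⟩

end Mstar

section HermitianMatrices

variable {R OO : Type} [CommRing R] [CommRing OO] [Algebra R OO] {ε : OO}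

def hermMatrix (ε : OO) (p : R × R × R × R) : Matrix (Fin 2) (Fin 2) OO :=
  !![algebraMap R OO p.1 + algebraMap R OO p.2.1 * ε, algebraMap R OO p.2.2.1;
    algebraMap R OO p.2.2.2, algebraMap R OO p.1 - algebraMap R OO p.2.1 * ε]

theorem hermMatrix_one_zero : hermMatrix (R := R) ε (1, 0, 0, 0) = 1 := by
  ext i j
  fin_cases i <;> fin_cases j <;> simp [hermMatrix]

theorem hermMatrix_mul_self {u : R} (hε2 : ε ^ 2 = algebraMap R OO u) (x y b c : R) :
    hermMatrix ε (x, y, b, c) * hermMatrix ε (x, y, b, c) =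
      hermMatrix ε (x ^ 2 + u * y ^ 2 + b * c, 2 * x * y, 2 * x * b, 2 * x * c) := by
  ext i j
  fin_cases i <;> fin_cases j <;>
    simp only [hermMatrix, Fin.zero_eta, Fin.mk_one, Fin.isValue, Matrix.mul_apply, of_apply,
      cons_val', cons_val_fin_one, cons_val_zero, cons_val_one, Fin.sum_univ_two, map_add, map_pow,
      map_mul, map_ofNat]
  · linear_combination (algebraMap R OO y) ^ 2 * hε2
  · ring
  · ring
  · linear_combination (algebraMap R OO y) ^ 2 * hε2

variable (hbasis : ∀ z : OO, ∃! xy : R × R,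
    z = algebraMap R OO xy.1 + algebraMap R OO xy.2 * ε)
  (cj : OO ≃ₐ[R] OO) (hcj : cj ε = -ε)

section Basis

include hbasis

theorem algebraMap_add_mul_inj {r s r' s' : R} :
    algebraMap R OO r + algebraMap R OO s * ε = algebraMap R OO r' + algebraMap R OO s' * ε ↔
      r = r' ∧ s = s' := by
  refine ⟨fun h => ?_, fun ⟨hr, hs⟩ => hr ▸ hs ▸ rfl⟩
  simpa using (hbasis _).unique (y₁ := (r, s)) (y₂ := (r', s')) rfl h

theorem hermMatrix_injective : Function.Injective (hermMatrix (R := R) ε) := by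
  rintro ⟨x, y, b, c⟩ ⟨x', y', b', c'⟩ h
  have h00 := congrFun (congrFun h 0) 0
  have h01 := congrFun (congrFun h 0) 1
  have h10 := congrFun (congrFun h 1) 0
  have hf : Function.Injective (algebraMap R OO) := fun r r' h =>
    ((algebraMap_add_mul_inj hbasis (s := 0) (s' := 0)).mp (by rw [h])).1
  simp only [hermMatrix, Matrix.of_apply, Matrix.cons_val', Matrix.cons_val_zero,
    Matrix.cons_val_one, Matrix.empty_val', Matrix.cons_val_fin_one] at h00 h01 h10
  obtain ⟨rfl, rfl⟩ := (algebraMap_add_mul_inj hbasis).mp h00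
  rw [hf h01, hf h10]

theorem hermMatrix_mul_self_eq_one_iff {u : R} (hε2 : ε ^ 2 = algebraMap R OO u)
    (h2 : IsUnit (2 : R)) (p : R × R × R × R) :
    hermMatrix ε p * hermMatrix ε p = 1 ↔ p ∈ involutionCoords u := by
  obtain ⟨x, y, b, c⟩ := p
  rw [hermMatrix_mul_self hε2, ← hermMatrix_one_zero (R := R), (hermMatrix_injective hbasis).eq_iff]
  simp only [Prod.mk.injEq, involutionCoords, Set.mem_ofPred_eq, mul_assoc,
    h2.mul_right_eq_zero]
  tauto

end Basis

section Conj

include hcj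

theorem conj_algebraMap_add_mul (r s : R) :
    cj (algebraMap R OO r + algebraMap R OO s * ε) =
      algebraMap R OO r - algebraMap R OO s * ε := by
  rw [map_add, map_mul, cj.commutes, cj.commutes, hcj, mul_neg, sub_eq_add_neg]

theorem mstar_hermMatrix (p : R × R × R × R) :
    mstar (cj : OO →+* OO) (hermMatrix ε p) = hermMatrix ε p := by
  have hconj := conj_algebraMap_add_mul cj hcj p.1 p.2.1
  have hconj' : cj (algebraMap R OO p.1 - algebraMap R OO p.2.1 * ε) =
      algebraMap R OO p.1 + algebraMap R OO p.2.1 * ε := by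
    rw [map_sub, map_mul, cj.commutes, cj.commutes, hcj, mul_neg, sub_neg_eq_add]
  rw [mstar_apply]
  ext i j
  fin_cases i <;> fin_cases j <;> simp [hermMatrix, hconj, hconj']

include hbasis

theorem exists_algebraMap_eq_of_conj_eq_self (h2 : IsUnit (2 : R)) {z : OO} (hz : cj z = z) :
    ∃ r, algebraMap R OO r = z := by
  obtain ⟨⟨r, s⟩, rfl, -⟩ := hbasis z
  rw [conj_algebraMap_add_mul cj hcj, sub_eq_add_neg, ← neg_mul, ← map_neg,
    algebraMap_add_mul_inj hbasis] at hz
  have hs : s = 0 := h2.mul_left_cancel (by linear_combination -hz.2)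
  exact ⟨r, by rw [hs, map_zero, zero_mul, add_zero]⟩

theorem mstar_eq_self_iff (h2 : IsUnit (2 : R)) {M : Matrix (Fin 2) (Fin 2) OO} :
    mstar (cj : OO →+* OO) M = M ↔ M ∈ Set.range (hermMatrix (R := R) ε) := by
  refine ⟨fun hM => ?_, by rintro ⟨p, rfl⟩; exact mstar_hermMatrix cj hcj p⟩
  have hentry (i j : Fin 2) := congrFun (congrFun hM i) j
  simp only [mstar_apply, Fin.isValue, RingHom.coe_coe, of_apply, cons_val', cons_val_fin_one,
    Fin.forall_fin_two, cons_val_zero, cons_val_one] at hentry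
  obtain ⟨⟨-, h01⟩, h10, h11⟩ := hentry
  obtain ⟨b, hb⟩ := exists_algebraMap_eq_of_conj_eq_self hbasis cj hcj h2 h01
  obtain ⟨c, hc⟩ := exists_algebraMap_eq_of_conj_eq_self hbasis cj hcj h2 h10
  obtain ⟨⟨x, y⟩, hxy, -⟩ := hbasis (M 0 0)
  rw [hxy, conj_algebraMap_add_mul cj hcj] at h11
  refine ⟨(x, y, b, c), ?_⟩
  rw [Matrix.eta_fin_two M, hermMatrix, hxy, hb, hc, h11]

theorem setOf_mstar_eq_self_and_mul_self_eq_one {u : R} (hε2 : ε ^ 2 = algebraMap R OO u)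
    (h2 : IsUnit (2 : R)) :
    {M : Matrix (Fin 2) (Fin 2) OO | mstar (cj : OO →+* OO) M = M ∧ M * M = 1} =
      hermMatrix ε '' involutionCoords u := by
  ext M
  constructor
  · rintro ⟨hstar, hsq⟩
    obtain ⟨p, rfl⟩ := (mstar_eq_self_iff hbasis cj hcj h2).mp hstar
    exact ⟨p, (hermMatrix_mul_self_eq_one_iff hbasis hε2 h2 p).mp hsq, rfl⟩
  · rintro ⟨p, hp, rfl⟩
    exact ⟨mstar_hermMatrix cj hcj p, (hermMatrix_mul_self_eq_one_iff hbasis hε2 h2 p).mpr hp⟩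

theorem card_GU2_sq_eq_one_of_basis [IsLocalRing R] [Finite R] {u : R}
    (hε2 : ε ^ 2 = algebraMap R OO u) (h2 : IsUnit (2 : R))
    (hw : ∀ y : R, IsUnit (1 - u * y ^ 2)) :
    Nat.card {g : GU2 OO (cj : OO →+* OO) // g ^ 2 = 1} = Nat.card R * Nat.card Rˣ + 2 := by
  rw [card_GU2_sq_eq_one, setOf_mstar_eq_self_and_mul_self_eq_one hbasis cj hcj hε2 h2,
    Nat.card_image_of_injective (hermMatrix_injective hbasis), card_involutionCoords h2 hw]

end Conj

end HermitianMatrices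

theorem count_involutions_GU2_general
    (O : Type) [CommRing O] [IsDomain O] [IsDiscreteValuationRing O]
    (π : O) (hπ : IsLocalRing.maximalIdeal O = Ideal.span {π})
    [Finite (IsLocalRing.ResidueField O)]
    (hodd : Odd (ringChar (IsLocalRing.ResidueField O)))
    (q : ℕ) (hq : Nat.card (IsLocalRing.ResidueField O) = q)
    (ℓ : ℕ) (hℓ : 1 ≤ ℓ)
    -- the unramified quadratic extension 𝔒_ℓ = 𝔬_ℓ[ε]
    (OO : Type) [CommRing OO] [Algebra (O ⧸ Ideal.span {π} ^ ℓ) OO]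
    (ε : OO) (u : O)
    (hnonsq : ¬ ∃ t : IsLocalRing.ResidueField O, t ^ 2 = IsLocalRing.residue O u)
    (hε2 : ε ^ 2 = algebraMap (O ⧸ Ideal.span {π} ^ ℓ) OO
      (Ideal.Quotient.mk (Ideal.span {π} ^ ℓ) u))
    (hbasis : ∀ z : OO, ∃! xy : (O ⧸ Ideal.span {π} ^ ℓ) × (O ⧸ Ideal.span {π} ^ ℓ),
      z = algebraMap (O ⧸ Ideal.span {π} ^ ℓ) OO xy.1 +
        algebraMap (O ⧸ Ideal.span {π} ^ ℓ) OO xy.2 * ε)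
    -- the Galois involution `x ↦ x°`
    (cj : OO ≃ₐ[O ⧸ Ideal.span {π} ^ ℓ] OO) (hcj : cj ε = -ε)
    :
    Nat.card {g : ↥(GU2 OO (cj : OO →+* OO)) // g ^ 2 = 1} =
      (q - 1) * q ^ (2 * ℓ - 1) + 2 := by
  obtain ⟨k, rfl⟩ : ∃ k, ℓ = k + 1 := ⟨ℓ - 1, by omega⟩
  have hcard : Nat.card (O ⧸ Ideal.span {π} ^ (k + 1)) = q ^ (k + 1) := by
    rw [← hπ, IsDiscreteValuationRing.card_quotient_maximalIdeal_pow, hq]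
  have hq0 : 0 < q := hq ▸ Nat.card_pos
  have : Finite (O ⧸ Ideal.span {π} ^ (k + 1)) :=
    Nat.finite_of_card_ne_zero (by rw [hcard]; positivity)
  have : Nontrivial (O ⧸ Ideal.span {π} ^ (k + 1)) :=
    Ideal.Quotient.nontrivial_iff.mpr <| ne_top_of_le_ne_top
      (hπ ▸ (maximalIdeal.isMaximal O).ne_top) (Ideal.pow_le_self k.succ_ne_zero)
  have hunits : Nat.card (O ⧸ Ideal.span {π} ^ (k + 1))ˣ = q ^ k * (q - 1) := by
    refine Nat.eq_of_mul_eq_mul_right hq0 ?_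
    have := card_units_mul_card_residueField (O ⧸ Ideal.span {π} ^ (k + 1))
    rw [card_residueField_quotient, hq, hcard] at this
    rw [this]; ring
  have h2 : IsUnit (2 : O ⧸ Ideal.span {π} ^ (k + 1)) := by
    simpa only [map_ofNat] using (isUnit_two_of_odd_ringChar hodd).map (Ideal.Quotient.mk _)
  have hw (y : O ⧸ Ideal.span {π} ^ (k + 1)) :
      IsUnit (1 - Ideal.Quotient.mk (Ideal.span {π} ^ (k + 1)) u * y ^ 2) := by
    obtain ⟨y, rfl⟩ := Ideal.Quotient.mk_surjective y
    simpa using (isUnit_one_sub_mul_sq hnonsq y).map (Ideal.Quotient.mk (Ideal.span {π} ^ (k + 1)))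
  rw [card_GU2_sq_eq_one_of_basis hbasis cj hcj hε2 h2 hw, hcard, hunits,
    show 2 * (k + 1) - 1 = k + 1 + k by omega]
  ring

theorem count_involutions_GU2
    (O : Type) [CommRing O] [IsDomain O] [IsDiscreteValuationRing O]
    [IsAdicComplete (IsLocalRing.maximalIdeal O) O]
    (π : O) (hπ : IsLocalRing.maximalIdeal O = Ideal.span {π})
    [Finite (IsLocalRing.ResidueField O)]
    (hodd : Odd (ringChar (IsLocalRing.ResidueField O)))
    (q : ℕ) (hq : Nat.card (IsLocalRing.ResidueField O) = q)
    (ℓ : ℕ) (hℓ : 1 ≤ ℓ)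
    -- the unramified quadratic extension 𝔒_ℓ = 𝔬_ℓ[ε]
    (OO : Type) [CommRing OO] [Algebra (O ⧸ Ideal.span {π} ^ ℓ) OO]
    (ε : OO) (u : O) (hu : IsUnit u)
    (hnonsq : ¬ ∃ t : IsLocalRing.ResidueField O, t ^ 2 = IsLocalRing.residue O u)
    (hε2 : ε ^ 2 = algebraMap (O ⧸ Ideal.span {π} ^ ℓ) OO
      (Ideal.Quotient.mk (Ideal.span {π} ^ ℓ) u))
    (hbasis : ∀ z : OO, ∃! xy : (O ⧸ Ideal.span {π} ^ ℓ) × (O ⧸ Ideal.span {π} ^ ℓ),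
      z = algebraMap (O ⧸ Ideal.span {π} ^ ℓ) OO xy.1 +
        algebraMap (O ⧸ Ideal.span {π} ^ ℓ) OO xy.2 * ε)
    -- the Galois involution `x ↦ x°`
    (cj : OO ≃ₐ[O ⧸ Ideal.span {π} ^ ℓ] OO) (hcj : cj ε = -ε)
    :
    Nat.card {g : ↥(GU2 OO (cj : OO →+* OO)) // g ^ 2 = 1} =
      (q - 1) * q ^ (2 * ℓ - 1) + 2 :=
  count_involutions_GU2_general O π hπ hodd q hq ℓ hℓ OO ε u hnonsq hε2 hbasis cj hcj
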